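/- If the instance (A,B) of nonempty sums of cycles is not consistent, i.e., L(A) ∨ L(A,B) ≠ L(B), then there is no sum of cycles X with AX = B. -/
import Mathlib


/-- A sum of cycles has all cycle lengths positive. -/
def Pos (A : ℕ →₀ ℕ) : Prop := ∀ a ∈ A.support, 0 < a

/-- The single cycle of length `n`. -/
noncomputable def Cyc (n : ℕ) : ℕ →₀ ℕ := Finsupp.single n 1

/-- Product of sums of cycles: `C_a · C_x = gcd(a,x) C_{lcm(a,x)}`, extended by distributivity. -/
noncomputable def cmul (A X : ℕ →₀ ℕ) : ℕ →₀ ℕ :=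
  A.sum fun a m => X.sum fun x n => (m * n * Nat.gcd a x) • Finsupp.single (Nat.lcm a x) 1

/-- Number of vertices of a sum of cycles. -/
def size (A : ℕ →₀ ℕ) : ℕ := A.sum fun ℓ m => ℓ * m

/-- The support `L(A,B)` of an instance. -/
def instSupp (A B : ℕ →₀ ℕ) : Set ℕ :=
  {x | 0 < x ∧ x ≤ size B / size A ∧ ∀ a ∈ A.support, Nat.lcm a x ∈ B.support}

/-- Consistency: `L(A) ∨ L(A,B) = L(B)`. -/
def Consistent (A B : ℕ →₀ ℕ) : Prop :=
  {ℓ | ∃ a ∈ A.support, ∃ x ∈ instSupp A B, Nat.lcm a x = ℓ} = ↑B.support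

/-- Cycle length multiplication `A ⊗ p`. -/
noncomputable def otimes (A : ℕ →₀ ℕ) (p : ℕ) : ℕ →₀ ℕ :=
  A.mapDomain (fun a => p * a)

/-- Cycle length division `A ⊘ p`: `(A ⊘ p)(a) = A (p*a)`. -/
noncomputable def oslash (A : ℕ →₀ ℕ) (p : ℕ) : ℕ →₀ ℕ :=
  if hp : p = 0 then 0 else
    Finsupp.comapDomain (fun a => p * a) A ((mul_right_injective₀ hp).injOn)

/-- Contraction `A ⊟ p`: each cycle of length `p*a` becomes `p` cycles of length `a`. -/
noncomputable def contract (A : ℕ →₀ ℕ) (p : ℕ) : ℕ →₀ ℕ :=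
  A.filter (fun a => ¬ p ∣ a) + p • oslash A p

lemma cmul_apply (A X : ℕ →₀ ℕ) (ℓ : ℕ) :
    cmul A X ℓ = ∑ a ∈ A.support, ∑ x ∈ X.support,
      A a * X x * Nat.gcd a x * (if Nat.lcm a x = ℓ then 1 else 0) := by
  unfold cmul Finsupp.sum
  simp only [Finsupp.finset_sum_apply, Finsupp.smul_apply, Finsupp.single_apply, smul_eq_mul,
    mul_ite, mul_one, mul_zero]

lemma size_add (f g : ℕ →₀ ℕ) : size (f + g) = size f + size g := by
  unfold size
  exact Finsupp.sum_add_index' (fun ℓ => mul_zero ℓ) (fun ℓ m n => mul_add ℓ m n)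

def sizeHom : (ℕ →₀ ℕ) →+ ℕ where
  toFun := size
  map_zero' := by simp [size]
  map_add' := size_add

lemma size_cmul (A X : ℕ →₀ ℕ) : size (cmul A X) = size A * size X := by
  show sizeHom (cmul A X) = _
  unfold cmul Finsupp.sum
  rw [map_sum]
  simp only [map_sum]
  have : ∀ a x : ℕ, sizeHom ((A a * X x * Nat.gcd a x) • Finsupp.single (Nat.lcm a x) 1)
      = (a * A a) * (x * X x) := by
    intro a x
    rw [Finsupp.smul_single]
    show size _ = _
    unfold size
    rw [Finsupp.sum_single_index (mul_zero _)]
    have := Nat.gcd_mul_lcm a x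
    rw [smul_eq_mul, mul_one]
    calc Nat.lcm a x * (A a * X x * Nat.gcd a x)
        = (Nat.gcd a x * Nat.lcm a x) * (A a * X x) := by ring
      _ = (a * x) * (A a * X x) := by rw [this]
      _ = a * A a * (x * X x) := by ring
  simp only [this]
  rw [← Finset.sum_mul_sum]
  rfl

lemma mem_support_cmul (A X : ℕ →₀ ℕ) (hA : Pos A) (ℓ : ℕ) :
    ℓ ∈ (cmul A X).support ↔ ∃ a ∈ A.support, ∃ x ∈ X.support, Nat.lcm a x = ℓ := by
  rw [Finsupp.mem_support_iff, cmul_apply]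
  constructor
  · intro hne
    by_contra hc; push_neg at hc
    apply hne
    refine Finset.sum_eq_zero fun a ha => Finset.sum_eq_zero fun x hx => ?_
    rw [if_neg (hc a ha x hx), mul_zero]
  · rintro ⟨a, ha, x, hx, rfl⟩
    intro h0
    rw [Finset.sum_eq_zero_iff] at h0
    have hterm := (Finset.sum_eq_zero_iff.mp (h0 a ha)) x hx
    rw [if_pos rfl, mul_one] at hterm
    rcases Nat.mul_eq_zero.mp hterm with h1 | h2
    · rcases Nat.mul_eq_zero.mp h1 with h3 | h4
      · exact Finsupp.mem_support_iff.mp ha h3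
      · exact Finsupp.mem_support_iff.mp hx h4
    · exact absurd h2 (Nat.pos_iff_ne_zero.mp (Nat.gcd_pos_of_pos_left x (hA a ha)))

lemma size_pos {A : ℕ →₀ ℕ} (hA : Pos A) (hne : A ≠ 0) : 0 < size A := by
  obtain ⟨a, ha⟩ := Finsupp.support_nonempty_iff.mpr hne
  unfold size Finsupp.sum
  refine Finset.sum_pos' (fun _ _ => Nat.zero_le _) ⟨a, ha, ?_⟩
  exact Nat.mul_pos (hA a ha) (Nat.pos_of_ne_zero (Finsupp.mem_support_iff.mp ha))

lemma le_size {X : ℕ →₀ ℕ} {x : ℕ} (hx : x ∈ X.support) : x ≤ size X := by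
  calc x ≤ x * X x :=
        Nat.le_mul_of_pos_right x (Nat.pos_of_ne_zero (Finsupp.mem_support_iff.mp hx))
    _ ≤ size X := Finset.single_le_sum (f := fun ℓ => ℓ * X ℓ) (fun _ _ => Nat.zero_le _) hx

theorem no_solution_of_not_consistent (A B : ℕ →₀ ℕ) (hA : Pos A) (hB : Pos B)
    (hAne : A ≠ 0) (hBne : B ≠ 0) (h : ¬ Consistent A B) :
    ¬ ∃ X : ℕ →₀ ℕ, Pos X ∧ cmul A X = B := by
  rintro ⟨X, hX, rfl⟩
  apply h
  have hsA := size_pos hA hAne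
  have hmem : ∀ x ∈ X.support, x ∈ instSupp A (cmul A X) := by
    intro x hx
    refine ⟨hX x hx, ?_, fun a ha => (mem_support_cmul A X hA _).mpr ⟨a, ha, x, hx, rfl⟩⟩
    rw [Nat.le_div_iff_mul_le hsA, size_cmul, mul_comm]
    exact Nat.mul_le_mul_left _ (le_size hx)
  ext ℓ
  simp only [Set.mem_setOf_eq, Finset.coe_sort_coe, Finset.mem_coe]
  constructor
  · rintro ⟨a, ha, x, hxI, rfl⟩
    exact hxI.2.2 a ha
  · intro hℓ
    obtain ⟨a, ha, x, hx, rfl⟩ := (mem_support_cmul A X hA ℓ).mp hℓ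
    exact ⟨a, ha, x, hmem x hx, rfl⟩
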